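/- Let Γ₁, Γ₂ be groups and let ι : Γ₁ → Γ₂ be an injective group homomorphism. Then the assignment g ↦ ι(g) (for g ∈ Γ₁), s₁ ↦ s₂, d₁ ↦ d₂ extends to a well-defined group homomorphism m(ι) : m(Γ₁) → m(Γ₂) between the standard mitoses, this homomorphism makes the square with the canonical maps Γᵢ → m(Γᵢ) commute, and m(ι) is injective. In other words, the standard mitosis construction is functorial and preserves monomorphisms. -/

import Mathlib

/-- The commutator with the convention `[x, y] := x⁻¹y⁻¹xy`. -/
def pcomm {G : Type*} [Group G] (x y : G) : G := x⁻¹ * y⁻¹ * x * y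

/-- The generator of the standard mitosis corresponding to `g ∈ Γ`,
as an element of the free group on `Γ ⊕ Bool` (`inr true ↦ s`, `inr false ↦ d`). -/
def mGen {Γ : Type*} [Group Γ] (g : Γ) : FreeGroup (Γ ⊕ Bool) :=
  FreeGroup.of (Sum.inl g)

/-- The extra generator `s` of the standard mitosis. -/
def mS (Γ : Type*) [Group Γ] : FreeGroup (Γ ⊕ Bool) := FreeGroup.of (Sum.inr true)

/-- The extra generator `d` of the standard mitosis. -/
def mD (Γ : Type*) [Group Γ] : FreeGroup (Γ ⊕ Bool) := FreeGroup.of (Sum.inr false)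

/-- The relators of the standard mitosis
`m(Γ) = ⟨Γ; s, d ∣ d⁻¹gd = g·s⁻¹gs, [g, s⁻¹hs] = 1 for all g, h ∈ Γ⟩`:
all relations holding in `Γ` among the generators coming from `Γ`, together with
the relators `d⁻¹gd·(g·s⁻¹gs)⁻¹` and `[g, s⁻¹hs]` for all `g, h ∈ Γ`. -/
def mitosisRels (Γ : Type*) [Group Γ] : Set (FreeGroup (Γ ⊕ Bool)) :=
  ((FreeGroup.map Sum.inl : FreeGroup Γ →* FreeGroup (Γ ⊕ Bool)) ''
      {w : FreeGroup Γ | FreeGroup.lift (id : Γ → Γ) w = 1})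
    ∪ {r | ∃ g : Γ, r = (mD Γ)⁻¹ * mGen g * mD Γ * (mGen g * (mS Γ)⁻¹ * mGen g * mS Γ)⁻¹}
    ∪ {r | ∃ g h : Γ, r = pcomm (mGen g) ((mS Γ)⁻¹ * mGen h * mS Γ)}

/-- The standard mitosis `m(Γ)` of a group `Γ`, as a presented group. -/
abbrev Mitosis (Γ : Type*) [Group Γ] : Type _ := PresentedGroup (mitosisRels Γ)

/-- The image in `m(Γ)` of the generator corresponding to `g ∈ Γ`. -/
def mGenM {Γ : Type*} [Group Γ] (g : Γ) : Mitosis Γ := PresentedGroup.of (Sum.inl g)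

/-- The image of the generator `s` in `m(Γ)`. -/
def mSM (Γ : Type*) [Group Γ] : Mitosis Γ := PresentedGroup.of (Sum.inr true)

/-- The image of the generator `d` in `m(Γ)`. -/
def mDM (Γ : Type*) [Group Γ] : Mitosis Γ := PresentedGroup.of (Sum.inr false)


/-!
`m(Γ)` is an iterated HNN extension. Over `Γ × Γ`, a stable letter `s` with
`s⁻¹ (g, 1) s = (1, g)` gives `Base Γ`; over it, a stable letter `d` with
`d⁻¹ (g, 1) d = (g, g)` gives `Model Γ`, and `g ↦ (g, 1)`, `s`, `d` define `m(Γ) → Model Γ`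
(in both extensions the stable letter is `HNNExtension.t`). The relators make
`(g, h) ↦ g · s⁻¹ h s` a homomorphism `Γ × Γ → m(Γ)`, which extends to a left inverse
`Model Γ → m(Γ)`. An injective `ι` induces maps of both HNN extensions that fix the stable
letters and commute with `m(ι)`. They are injective by Britton's lemma: the associated
subgroups are reflected (`(ι × ι)⁻¹ (1 × Γ₂) = 1 × Γ₁`, and so on), so a reduced word maps to
a reduced word.
-/

theorem map_pcomm {G H : Type*} [Group G] [Group H] (f : G →* H) (x y : G) :
    f (pcomm x y) = pcomm (f x) (f y) := by
  simp only [pcomm, map_mul, map_inv]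

theorem pcomm_eq_one_iff {G : Type*} [Group G] {x y : G} : pcomm x y = 1 ↔ Commute x y := by
  rw [show pcomm x y = (y * x)⁻¹ * (x * y) by simp only [pcomm, mul_inv_rev, mul_assoc],
    inv_mul_eq_one, eq_comm]
  rfl

namespace MonoidHom

theorem inl_injective {M N : Type*} [MulOneClass M] [MulOneClass N] :
    Function.Injective (inl M N) := fun _ _ h => congrArg Prod.fst h

theorem inr_injective {M N : Type*} [MulOneClass M] [MulOneClass N] :
    Function.Injective (inr M N) := fun _ _ h => congrArg Prod.snd h

section ProdMap

variable {M N M' N' : Type*} [Group M] [Group N] [Group M'] [Group N'] {f : M →* M'}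
  (g : N →* N')

theorem comap_prodMap_range_inr_le (hf : Function.Injective f) :
    (inr M' N').range.comap (f.prodMap g) ≤ (inr M N).range := by
  rintro ⟨a, b⟩ ⟨k, hk⟩
  have ha : a = 1 := (map_eq_one_iff f hf).1 (by simpa using (congrArg Prod.fst hk).symm)
  exact ⟨b, by simp [ha]⟩

theorem comap_prodMap_range_inl_le (hf : Function.Injective f) :
    (inl N' M').range.comap (g.prodMap f) ≤ (inl N M).range := by
  rintro ⟨a, b⟩ ⟨k, hk⟩
  have hb : b = 1 := (map_eq_one_iff f hf).1 (by simpa using (congrArg Prod.snd hk).symm)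
  exact ⟨a, by simp [hb]⟩

end ProdMap

section RangeEquiv

variable {K G : Type*} [Group K] [Group G] {α β : K →* G}
  (hα : Function.Injective α) (hβ : Function.Injective β)

noncomputable def rangeEquiv : α.range ≃* β.range :=
  (ofInjective hα).symm.trans (ofInjective hβ)

theorem rangeEquiv_apply {x : α.range} {k : K} (hx : (x : G) = α k) :
    (rangeEquiv hα hβ x : G) = β k := by
  have : (ofInjective hα).symm x = k := (MulEquiv.symm_apply_eq _).2 (Subtype.ext hx)
  simp only [rangeEquiv, MulEquiv.trans_apply, this, ofInjective_apply]

end RangeEquiv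

end MonoidHom

namespace HNNExtension

theorem inv_t_mul_of_mul_t {K G : Type*} [Group K] [Group G] {α β : K →* G}
    (hα : Function.Injective α) (hβ : Function.Injective β) (k : K) :
    (t⁻¹ * of (β k) * t : HNNExtension G α.range β.range (MonoidHom.rangeEquiv hα hβ)) =
      of (α k) := by
  have h := equiv_eq_conj (φ := MonoidHom.rangeEquiv hα hβ) ⟨α k, k, rfl⟩
  rw [MonoidHom.rangeEquiv_apply _ _ rfl] at h
  rw [h]
  group

variable {G₁ G₂ : Type*} [Group G₁] [Group G₂] {A₁ B₁ : Subgroup G₁}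
  {A₂ B₂ : Subgroup G₂} {φ₁ : A₁ ≃* B₁} {φ₂ : A₂ ≃* B₂}

def map (f : G₁ →* G₂) (hA : A₁ ≤ A₂.comap f)
    (hφ : ∀ a : A₁, f (φ₁ a) = φ₂ ⟨f a, hA a.2⟩) :
    HNNExtension G₁ A₁ B₁ φ₁ →* HNNExtension G₂ A₂ B₂ φ₂ :=
  lift (of.comp f) t fun a => by
    rw [MonoidHom.comp_apply, MonoidHom.comp_apply, hφ]
    exact t_mul_of (φ := φ₂) ⟨f a, hA a.2⟩

variable (f : G₁ →* G₂) (hA : A₁ ≤ A₂.comap f) (hφ : ∀ a : A₁, f (φ₁ a) = φ₂ ⟨f a, hA a.2⟩)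

@[simp] theorem map_of (g : G₁) : map f hA hφ (of g) = of (f g) := lift_of ..

@[simp] theorem map_t : map f hA hφ t = t := lift_t ..

variable {f} (hA' : A₂.comap f ≤ A₁) (hB' : B₂.comap f ≤ B₁)

include hA' hB' in
theorem comap_toSubgroup_le (u : ℤˣ) :
    (toSubgroup A₂ B₂ u).comap f ≤ toSubgroup A₁ B₁ u := by
  rcases Int.units_eq_one_or u with rfl | rfl
  exacts [hA', hB']

namespace NormalWord.ReducedWord

def map (w : ReducedWord G₁ A₁ B₁) : ReducedWord G₂ A₂ B₂ where
  head := f w.head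
  toList := w.toList.map (Prod.map id f)
  chain := (List.isChain_map _).2 <| w.chain.imp fun a _ hab hmem =>
    hab (comap_toSubgroup_le hA' hB' a.1 hmem)

theorem prod_map (w : ReducedWord G₁ A₁ B₁) :
    (w.map hA' hB').prod φ₂ = HNNExtension.map f hA hφ (w.prod φ₁) := by
  simp [ReducedWord.prod, ReducedWord.map, MonoidHom.map_list_prod, Function.comp_def]

theorem exists_prod_eq (x : HNNExtension G₁ A₁ B₁ φ₁) :
    ∃ w : ReducedWord G₁ A₁ B₁, w.prod φ₁ = x := by
  obtain ⟨d⟩ := TransversalPair.nonempty G₁ A₁ B₁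
  exact ⟨(NormalWord.equiv φ₁ d x).toReducedWord, (NormalWord.equiv φ₁ d).symm_apply_apply x⟩

end NormalWord.ReducedWord

include hA' hB' in
/-- Britton's lemma, applied to the image of a reduced word: it is reduced because `f` reflects
the associated subgroups. -/
theorem map_eq_of_iff {x : HNNExtension G₁ A₁ B₁ φ₁} {y : G₂} :
    map f hA hφ x = of y ↔ ∃ g, f g = y ∧ of g = x := by
  refine ⟨fun h => ?_, fun ⟨g, hg, hx⟩ => by rw [← hx, map_of, hg]⟩
  obtain ⟨w, rfl⟩ := NormalWord.ReducedWord.exists_prod_eq x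
  have hw : (w.map hA' hB').toList = [] :=
    ReducedWord.toList_eq_nil_of_mem_of_range φ₂ _
      ⟨y, by rw [NormalWord.ReducedWord.prod_map hA hφ, h]⟩
  have hprod : w.prod φ₁ = of w.head := by
    simp_all [NormalWord.ReducedWord.map, NormalWord.ReducedWord.prod]
  refine ⟨w.head, of_injective (φ := φ₂) ?_, hprod.symm⟩
  rw [← map_of f hA hφ, ← hprod, h]

include hA' hB' in
theorem map_injective (hf : Function.Injective f) : Function.Injective (map f hA hφ) := by
  refine (injective_iff_map_eq_one _).2 fun x hx => ?_
  obtain ⟨g, hg, rfl⟩ := (map_eq_of_iff hA hφ hA' hB').1 (hx.trans (map_one of).symm)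
  rw [(map_eq_one_iff f hf).1 hg, map_one]

end HNNExtension

namespace Mitosis

open HNNExtension

section Lift

variable {Γ M : Type*} [Group Γ] [Group M]

def lift (φ : Γ →* M) (s d : M) (hd : ∀ g, d⁻¹ * φ g * d = φ g * s⁻¹ * φ g * s)
    (hc : ∀ g h, Commute (φ g) (s⁻¹ * φ h * s)) : Mitosis Γ →* M :=
  PresentedGroup.toGroup (f := Sum.elim φ fun b => cond b s d) <| by
    rintro r ((⟨w, hw, rfl⟩ | ⟨g, rfl⟩) | ⟨g, h, rfl⟩)
    · have hcomp : (FreeGroup.lift (Sum.elim φ fun b => cond b s d)).comp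
          (FreeGroup.map Sum.inl) = φ.comp (FreeGroup.lift id) :=
        FreeGroup.ext_hom _ _ fun _ => by simp
      rw [← MonoidHom.comp_apply, hcomp, MonoidHom.comp_apply, hw, map_one]
    · rw [map_mul, map_inv, mul_inv_eq_one]
      simpa [mGen, mS, mD] using hd g
    · rw [map_pcomm, pcomm_eq_one_iff]
      simpa [mGen, mS] using hc g h

variable (φ : Γ →* M) (s d : M) (hd : ∀ g, d⁻¹ * φ g * d = φ g * s⁻¹ * φ g * s)
  (hc : ∀ g h, Commute (φ g) (s⁻¹ * φ h * s))

@[simp] theorem lift_mGenM (g : Γ) : lift φ s d hd hc (mGenM g) = φ g :=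
  PresentedGroup.toGroup.of _

@[simp] theorem lift_mSM : lift φ s d hd hc (mSM Γ) = s := PresentedGroup.toGroup.of _

@[simp] theorem lift_mDM : lift φ s d hd hc (mDM Γ) = d := PresentedGroup.toGroup.of _

@[ext] theorem hom_ext {f f' : Mitosis Γ →* M} (hgen : ∀ g, f (mGenM g) = f' (mGenM g))
    (hs : f (mSM Γ) = f' (mSM Γ)) (hd : f (mDM Γ) = f' (mDM Γ)) : f = f' :=
  PresentedGroup.ext <| by rintro (g | _ | _); exacts [hgen g, hd, hs]

end Lift

section Relations

variable {Γ : Type*} [Group Γ]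

theorem mGenM_mul (g h : Γ) : mGenM (g * h) = mGenM g * mGenM h :=
  PresentedGroup.mk_eq_mk_of_mul_inv_mem <| Or.inl <| Or.inl
    ⟨FreeGroup.of (g * h) * (FreeGroup.of g * FreeGroup.of h)⁻¹, by simp, by simp⟩

variable (Γ) in
def genHom : Γ →* Mitosis Γ := MonoidHom.mk' mGenM mGenM_mul

@[simp] theorem genHom_apply (g : Γ) : genHom Γ g = mGenM g := rfl

@[simp] theorem mGenM_one : mGenM (1 : Γ) = 1 := map_one (genHom Γ)

theorem inv_mDM_mul_mGenM_mul_mDM (g : Γ) :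
    (mDM Γ)⁻¹ * mGenM g * mDM Γ = mGenM g * (mSM Γ)⁻¹ * mGenM g * mSM Γ :=
  PresentedGroup.mk_eq_mk_of_mul_inv_mem <| Or.inl <| Or.inr ⟨g, rfl⟩

theorem commute_mGenM_conj (g h : Γ) :
    Commute (mGenM g) ((mSM Γ)⁻¹ * mGenM h * mSM Γ) := by
  have hr := PresentedGroup.one_of_mem (rels := mitosisRels Γ) (Or.inr ⟨g, h, rfl⟩)
  rwa [map_pcomm, pcomm_eq_one_iff] at hr

end Relations

section Model

variable (Γ : Type*) [Group Γ]

noncomputable abbrev Base : Type _ :=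
  HNNExtension (Γ × Γ) (MonoidHom.inr Γ Γ).range (MonoidHom.inl Γ Γ).range
    (MonoidHom.rangeEquiv MonoidHom.inr_injective MonoidHom.inl_injective)

noncomputable abbrev diagHom : Γ →* Base Γ := of.comp ((MonoidHom.id Γ).prod (MonoidHom.id Γ))

noncomputable abbrev inlHom : Γ →* Base Γ := of.comp (MonoidHom.inl Γ Γ)

theorem diagHom_injective : Function.Injective (diagHom Γ) :=
  (of_injective _).comp (f := (MonoidHom.id Γ).prod (MonoidHom.id Γ))
    fun _ _ h => congrArg Prod.fst h

theorem inlHom_injective : Function.Injective (inlHom Γ) :=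
  (of_injective _).comp MonoidHom.inl_injective

noncomputable abbrev Model : Type _ :=
  HNNExtension (Base Γ) (diagHom Γ).range (inlHom Γ).range
    (MonoidHom.rangeEquiv (diagHom_injective Γ) (inlHom_injective Γ))

variable {Γ}

theorem Base.inv_t_mul_of_mul_t (g : Γ) : (t⁻¹ * of (g, 1) * t : Base Γ) = of (1, g) :=
  HNNExtension.inv_t_mul_of_mul_t _ _ g

theorem Model.inv_t_mul_of_mul_t (g : Γ) :
    (t⁻¹ * of (of (g, 1)) * t : Model Γ) = of (of (g, g)) :=
  HNNExtension.inv_t_mul_of_mul_t _ _ g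

variable (Γ) in
noncomputable def toModel : Mitosis Γ →* Model Γ :=
  lift (of.comp (inlHom Γ)) (of t) t
    (fun g => by
      simp only [MonoidHom.comp_apply, MonoidHom.inl_apply, Model.inv_t_mul_of_mul_t]
      rw [show ∀ x y : Model Γ, x * y⁻¹ * x * y = x * (y⁻¹ * x * y) by intros; group,
        ← map_inv, ← map_mul, ← map_mul, Base.inv_t_mul_of_mul_t]
      simp only [← map_mul, Prod.mk_mul_mk, mul_one, one_mul])
    (fun g h => by
      simp only [MonoidHom.comp_apply, MonoidHom.inl_apply]
      rw [← map_inv, ← map_mul, ← map_mul, Base.inv_t_mul_of_mul_t]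
      exact ((Commute.prod (Commute.one_right g) (Commute.one_left h)).map of).map of)

@[simp] theorem toModel_mGenM (g : Γ) : toModel Γ (mGenM g) = of (of (g, 1)) := lift_mGenM ..

@[simp] theorem toModel_mSM : toModel Γ (mSM Γ) = of t := lift_mSM ..

@[simp] theorem toModel_mDM : toModel Γ (mDM Γ) = t := lift_mDM ..

variable (Γ) in
noncomputable def ofBase : Base Γ →* Mitosis Γ :=
  HNNExtension.lift
    ((genHom Γ).noncommCoprod ((MulAut.conj (mSM Γ)⁻¹).toMonoidHom.comp (genHom Γ))
      fun g h => by simpa using commute_mGenM_conj g h)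
    (mSM Γ) (by
      rintro ⟨_, g, rfl⟩
      rw [MonoidHom.rangeEquiv_apply _ _ rfl]
      simp
      group)

@[simp] theorem ofBase_of (p : Γ × Γ) :
    ofBase Γ (of p) = mGenM p.1 * ((mSM Γ)⁻¹ * mGenM p.2 * mSM Γ) := by
  simp [ofBase]

@[simp] theorem ofBase_t : ofBase Γ t = mSM Γ := lift_t ..

variable (Γ) in
noncomputable def ofModel : Model Γ →* Mitosis Γ :=
  HNNExtension.lift (ofBase Γ) (mDM Γ) (by
    rintro ⟨_, g, rfl⟩
    rw [MonoidHom.rangeEquiv_apply _ _ rfl]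
    have hd := inv_mDM_mul_mGenM_mul_mDM g
    simp only [mul_assoc] at hd
    simp [mul_assoc, ← hd])

@[simp] theorem ofModel_of (x : Base Γ) : ofModel Γ (of x) = ofBase Γ x := lift_of ..

@[simp] theorem ofModel_t : ofModel Γ t = mDM Γ := lift_t ..

theorem ofModel_comp_toModel : (ofModel Γ).comp (toModel Γ) = MonoidHom.id (Mitosis Γ) := by
  ext <;> simp

theorem toModel_injective : Function.Injective (toModel Γ) :=
  Function.LeftInverse.injective (g := ofModel Γ) (DFunLike.congr_fun ofModel_comp_toModel)

end Model

section Functoriality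

variable {Γ₁ Γ₂ : Type*} [Group Γ₁] [Group Γ₂] (ι : Γ₁ →* Γ₂)

def map : Mitosis Γ₁ →* Mitosis Γ₂ :=
  lift ((genHom Γ₂).comp ι) (mSM Γ₂) (mDM Γ₂) (fun g => inv_mDM_mul_mGenM_mul_mDM (ι g))
    fun g h => commute_mGenM_conj (ι g) (ι h)

@[simp] theorem map_mGenM (g : Γ₁) : map ι (mGenM g) = mGenM (ι g) := lift_mGenM ..

@[simp] theorem map_mSM : map ι (mSM Γ₁) = mSM Γ₂ := lift_mSM ..

@[simp] theorem map_mDM : map ι (mDM Γ₁) = mDM Γ₂ := lift_mDM ..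

noncomputable def baseMap : Base Γ₁ →* Base Γ₂ :=
  HNNExtension.map (ι.prodMap ι) (by rintro _ ⟨g, rfl⟩; exact ⟨ι g, by simp⟩)
    fun ⟨_, g, hg⟩ => by
      rw [MonoidHom.rangeEquiv_apply _ _ hg.symm,
        MonoidHom.rangeEquiv_apply _ _ (k := ι g) (by simp [← hg])]
      simp

@[simp] theorem baseMap_of (p : Γ₁ × Γ₁) : baseMap ι (of p) = of (ι p.1, ι p.2) :=
  HNNExtension.map_of ..

@[simp] theorem baseMap_t : baseMap ι t = t := HNNExtension.map_t ..

noncomputable def modelMap : Model Γ₁ →* Model Γ₂ :=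
  HNNExtension.map (baseMap ι) (by rintro _ ⟨g, rfl⟩; exact ⟨ι g, by simp⟩)
    fun ⟨_, g, hg⟩ => by
      rw [MonoidHom.rangeEquiv_apply _ _ hg.symm,
        MonoidHom.rangeEquiv_apply _ _ (k := ι g) (by simp [← hg])]
      simp

theorem modelMap_comp_toModel :
    (modelMap ι).comp (toModel Γ₁) = (toModel Γ₂).comp (Mitosis.map ι) := by
  ext <;> simp [modelMap]

variable {ι} (hι : Function.Injective ι)
include hι

theorem baseMap_eq_of_iff {x : Base Γ₁} {y : Γ₂ × Γ₂} :
    baseMap ι x = of y ↔ ∃ p, ι.prodMap ι p = y ∧ of p = x :=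
  HNNExtension.map_eq_of_iff _ _ (MonoidHom.comap_prodMap_range_inr_le ι hι)
    (MonoidHom.comap_prodMap_range_inl_le ι hι)

theorem comap_baseMap_range_diagHom_le :
    (diagHom Γ₂).range.comap (baseMap ι) ≤ (diagHom Γ₁).range := by
  rintro x ⟨k, hk⟩
  obtain ⟨⟨a, b⟩, hab, rfl⟩ := (baseMap_eq_of_iff hι).1 hk.symm
  have : a = b := hι (by simpa using (congrArg Prod.fst hab).trans (congrArg Prod.snd hab).symm)
  exact ⟨a, by simp [this]⟩

theorem comap_baseMap_range_inlHom_le :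
    (inlHom Γ₂).range.comap (baseMap ι) ≤ (inlHom Γ₁).range := by
  rintro x ⟨k, hk⟩
  obtain ⟨⟨a, b⟩, hab, rfl⟩ := (baseMap_eq_of_iff hι).1 hk.symm
  have : b = 1 := (map_eq_one_iff ι hι).1 (by simpa using congrArg Prod.snd hab)
  exact ⟨a, by simp [this]⟩

theorem modelMap_injective : Function.Injective (modelMap ι) :=
  HNNExtension.map_injective _ _ (comap_baseMap_range_diagHom_le hι)
    (comap_baseMap_range_inlHom_le hι) <|
  HNNExtension.map_injective _ _ (MonoidHom.comap_prodMap_range_inr_le ι hι)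
    (MonoidHom.comap_prodMap_range_inl_le ι hι) (hι.prodMap hι)

theorem map_injective : Function.Injective (Mitosis.map ι) := by
  have h := (modelMap_injective hι).comp (toModel_injective (Γ := Γ₁))
  rw [← MonoidHom.coe_comp, modelMap_comp_toModel, MonoidHom.coe_comp] at h
  exact h.of_comp

end Functoriality

end Mitosis

/-- The standard mitosis construction is functorial and preserves
monomorphisms: every injective homomorphism `ι : Γ₁ → Γ₂` extends to a
homomorphism `m(ι) : m(Γ₁) → m(Γ₂)` with `g ↦ ι(g)`, `s₁ ↦ s₂`, `d₁ ↦ d₂`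
(so that the square with the canonical maps `Γᵢ → m(Γᵢ)` commutes),
and `m(ι)` is injective. -/
theorem mitosis_functorial_injective
    (Γ₁ Γ₂ : Type*) [Group Γ₁] [Group Γ₂]
    (ι : Γ₁ →* Γ₂) (hι : Function.Injective ι) :
    ∃ M : Mitosis Γ₁ →* Mitosis Γ₂,
      (∀ g : Γ₁, M (mGenM g) = mGenM (ι g)) ∧
      M (mSM Γ₁) = mSM Γ₂ ∧
      M (mDM Γ₁) = mDM Γ₂ ∧
      Function.Injective M :=
  ⟨Mitosis.map ι, Mitosis.map_mGenM ι, Mitosis.map_mSM ι, Mitosis.map_mDM ι,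
    Mitosis.map_injective hι⟩
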